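/- arXiv:2407.09097 — 4 statements merged into one kernel-verified Lean document; each statement's English description precedes it below -/
import Mathlib

section
/- If p and q are coprime integers and a finite system of linear equations over the rationals has a p-solution (a rational solution in which every variable takes value 0 or an integer power of p) and a q-solution, then the system has an integral solution. -/
/-- A `p`-solution of a linear system: a solution in which every variable takes
value `0` or an integer power of `p`. This predicate captures the value condition. -/
def IsPPowValued (p : ℤ) {σ : Type*} (Φ : σ → ℚ) : Prop :=
  ∀ x, Φ x = 0 ∨ ∃ i : ℤ, Φ x = (p : ℚ) ^ i

/-- A uniform denominator-clearing lemma: if every value of `Φ` is zero or an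
integer power of `p`, then some single power `p ^ N` clears all denominators. -/
lemma exists_pow_mul_int (p : ℤ) {σ : Type*} [Fintype σ] (Φ : σ → ℚ)
    (h : IsPPowValued p Φ) : ∃ N : ℕ, ∀ x, ∃ n : ℤ, ((p : ℚ)) ^ N * Φ x = (n : ℚ) := by
  have h1 : ∀ x, ∃ k : ℕ, ∃ n : ℤ, (p : ℚ) ^ k * Φ x = (n : ℚ) := by
    intro x
    rcases h x with h0 | ⟨i, hi⟩
    · exact ⟨0, 0, by simp [h0]⟩
    · by_cases hp : (p : ℚ) = 0
      · rcases eq_or_ne i 0 with rfl | hne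
        · exact ⟨0, 1, by simp [hi]⟩
        · exact ⟨0, 0, by simp [hi, hp, zero_zpow _ hne]⟩
      · refine ⟨i.natAbs, p ^ (((i.natAbs : ℤ) + i).toNat), ?_⟩
        rw [hi, ← zpow_natCast (p : ℚ) i.natAbs, ← zpow_add₀ hp]
        have hc : ((p ^ (((i.natAbs : ℤ) + i).toNat) : ℤ) : ℚ)
            = (p : ℚ) ^ (((i.natAbs : ℤ) + i).toNat) := by push_cast; ring
        rw [hc, ← zpow_natCast (p : ℚ) (((i.natAbs : ℤ) + i).toNat)]
        congr 1
        omega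
  choose K n hn using h1
  refine ⟨Finset.univ.sup K, fun x => ⟨p ^ (Finset.univ.sup K - K x) * n x, ?_⟩⟩
  have hK : K x ≤ Finset.univ.sup K := Finset.le_sup (Finset.mem_univ x)
  have hsplit : (p : ℚ) ^ (Finset.univ.sup K)
      = (p : ℚ) ^ (Finset.univ.sup K - K x) * (p : ℚ) ^ (K x) := by
    rw [← pow_add]; congr 1; omega
  rw [hsplit, mul_assoc, hn x]
  push_cast
  ring

/-- If `p` and `q` are coprime integers and a finite system of linear equations over `ℚ`
has a `p`-solution and a `q`-solution, then it has an integral solution. -/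
theorem p_q_solution_implies_integral
    {ι σ : Type*} [Fintype ι] [Fintype σ]
    (M : ι → σ → ℚ) (b : ι → ℚ) (p q : ℤ) (hpq : IsCoprime p q)
    (Φp Φq : σ → ℚ)
    (hΦp : ∀ i, ∑ x, M i x * Φp x = b i)
    (hΦq : ∀ i, ∑ x, M i x * Φq x = b i)
    (hp : IsPPowValued p Φp) (hq : IsPPowValued q Φq) :
    ∃ Φ : σ → ℚ, (∀ i, ∑ x, M i x * Φ x = b i) ∧ ∀ x, ∃ n : ℤ, Φ x = (n : ℚ) := by
  obtain ⟨N, hN⟩ := exists_pow_mul_int p Φp hp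
  obtain ⟨L, hL⟩ := exists_pow_mul_int q Φq hq
  choose np hnp using hN
  choose nq hnq using hL
  obtain ⟨u, v, huv⟩ : IsCoprime (p ^ N) (q ^ L) := hpq.pow
  have huv' : (u : ℚ) * (p : ℚ) ^ N + (v : ℚ) * (q : ℚ) ^ L = 1 := by
    have := congrArg (fun z : ℤ => (z : ℚ)) huv
    push_cast at this
    linarith
  refine ⟨fun x => (u : ℚ) * ((p : ℚ) ^ N * Φp x) + (v : ℚ) * ((q : ℚ) ^ L * Φq x),
    fun i => ?_, fun x => ⟨u * np x + v * nq x, by push_cast [← hnp x, ← hnq x]; ring⟩⟩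
  have : ∑ x, M i x * ((u : ℚ) * ((p : ℚ) ^ N * Φp x) + (v : ℚ) * ((q : ℚ) ^ L * Φq x))
      = ((u : ℚ) * (p : ℚ) ^ N) * ∑ x, M i x * Φp x
        + ((v : ℚ) * (q : ℚ) ^ L) * ∑ x, M i x * Φq x := by
    rw [Finset.mul_sum, Finset.mul_sum, ← Finset.sum_add_distrib]
    exact Finset.sum_congr rfl fun x _ => by ring
  rw [this, hΦp i, hΦq i, ← add_mul, huv', one_mul]
end

section
/- In the tractable homomorphism or-construction: if f : B₁ → A₁ is a homomorphism, then the map g : B → A defined by g(b) = f(b) for b ∈ B₁ and g(b) = c₂ for b ∈ B₂ is a homomorphism from B = OR(B₁,B₂) to A = OR_T(A₁,A₂). -/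
/-- A relational structure over vocabulary `τ` with arities `ar` and universe `U`. -/
structure RelStr (τ : Type*) (ar : τ → ℕ) (U : Type*) where
  rel : ∀ R : τ, Set (Fin (ar R) → U)

/-- `h` is a homomorphism from `A` to `B`. -/
def IsHom {τ : Type*} {ar : τ → ℕ} {U V : Type*}
    (A : RelStr τ ar U) (B : RelStr τ ar V) (h : U → V) : Prop :=
  ∀ R t, t ∈ A.rel R → (fun j => h (t j)) ∈ B.rel R

/-- The universe of the or-construction template: the disjoint union of `α₁`, `α₂`
and two fresh elements `c1`, `c2`. -/
inductive OrU (α₁ α₂ : Type*) where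
  | a1 : α₁ → OrU α₁ α₂
  | a2 : α₂ → OrU α₁ α₂
  | c1 : OrU α₁ α₂
  | c2 : OrU α₁ α₂

/-- The combined vocabulary `τ₁ ∪ τ₂ ∪ {S}` and its arities; `S` is binary. -/
def orAr {τ₁ τ₂ : Type*} (ar₁ : τ₁ → ℕ) (ar₂ : τ₂ → ℕ) : τ₁ ⊕ τ₂ ⊕ Unit → ℕ :=
  Sum.elim ar₁ (Sum.elim ar₂ (fun _ => 2))

/-- The instance `OR(B₁,B₂)`: universe `B₁ ⊎ B₂`, `S = B₁ × B₂`, and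
the relations of `B₁` and `B₂` embedded. -/
def ORinst {τ₁ τ₂ : Type*} {ar₁ : τ₁ → ℕ} {ar₂ : τ₂ → ℕ} {β₁ β₂ : Type*}
    (B₁ : RelStr τ₁ ar₁ β₁) (B₂ : RelStr τ₂ ar₂ β₂) :
    RelStr (τ₁ ⊕ τ₂ ⊕ Unit) (orAr ar₁ ar₂) (β₁ ⊕ β₂) where
  rel R := match R with
    | Sum.inl R₀ => {t | ∃ s ∈ B₁.rel R₀, t = fun j => Sum.inl (s j)}
    | Sum.inr (Sum.inl R₀) => {t | ∃ s ∈ B₂.rel R₀, t = fun j => Sum.inr (s j)}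
    | Sum.inr (Sum.inr _) =>
        show Set (Fin 2 → β₁ ⊕ β₂) from
          {t | (∃ b, t 0 = Sum.inl b) ∧ (∃ b, t 1 = Sum.inr b)}

/-- The tractable or-construction template `OR_T(A₁,A₂)`: universe
`A₁ ⊎ A₂ ⊎ {c₁,c₂}`, with `R^A = R^{A_i} ∪ {c_i}^{ar R}` for `R ∈ τᵢ` and
`S^A = (A₁ × {c₂}) ∪ ({c₁} × A₂)`. -/
def ORtmpl {τ₁ τ₂ : Type*} {ar₁ : τ₁ → ℕ} {ar₂ : τ₂ → ℕ} {α₁ α₂ : Type*}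
    (A₁ : RelStr τ₁ ar₁ α₁) (A₂ : RelStr τ₂ ar₂ α₂) :
    RelStr (τ₁ ⊕ τ₂ ⊕ Unit) (orAr ar₁ ar₂) (OrU α₁ α₂) where
  rel R := match R with
    | Sum.inl R₀ =>
        {t | (∃ s ∈ A₁.rel R₀, t = fun j => OrU.a1 (s j)) ∨ t = fun _ => OrU.c1}
    | Sum.inr (Sum.inl R₀) =>
        {t | (∃ s ∈ A₂.rel R₀, t = fun j => OrU.a2 (s j)) ∨ t = fun _ => OrU.c2}
    | Sum.inr (Sum.inr _) =>
        show Set (Fin 2 → OrU α₁ α₂) from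
          {t | ((∃ a, t 0 = OrU.a1 a) ∧ t 1 = OrU.c2) ∨
               (t 0 = OrU.c1 ∧ (∃ a, t 1 = OrU.a2 a))}

/-- If `f : B₁ → A₁` is a homomorphism, then mapping `B₁` via `f` (into the `A₁` part)
and sending every element of `B₂` to `c₂` gives a homomorphism
from `OR(B₁,B₂)` to `OR_T(A₁,A₂)`. -/
theorem or_construction_extend_hom
    {τ₁ τ₂ : Type*} {ar₁ : τ₁ → ℕ} {ar₂ : τ₂ → ℕ} {α₁ α₂ β₁ β₂ : Type*}
    (A₁ : RelStr τ₁ ar₁ α₁) (A₂ : RelStr τ₂ ar₂ α₂)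
    (B₁ : RelStr τ₁ ar₁ β₁) (B₂ : RelStr τ₂ ar₂ β₂)
    (f : β₁ → α₁) (hf : IsHom B₁ A₁ f) :
    IsHom (ORinst B₁ B₂) (ORtmpl A₁ A₂)
      (Sum.elim (fun b => OrU.a1 (f b)) (fun _ => OrU.c2)) := by
  rintro (R₀ | R₀ | u) t ht
  · obtain ⟨s, hs, rfl⟩ := ht
    exact Or.inl ⟨fun j => f (s j), hf R₀ s hs, rfl⟩
  · obtain ⟨s, hs, rfl⟩ := ht
    exact Or.inr rfl
  · obtain ⟨⟨b, hb⟩, ⟨b', hb'⟩⟩ := ht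
    exact Or.inl ⟨⟨f b, by simp [hb]⟩, by simp [hb']⟩
end

section
/- If A₁ and A₂ each admit a Maltsev polymorphism, then the tractable homomorphism or-construction OR_T(A₁,A₂) admits a Maltsev polymorphism. -/
/-- A ternary polymorphism of a relational structure. -/
def IsPolymorphism3 {τ : Type*} {ar : τ → ℕ} {U : Type*}
    (A : RelStr τ ar U) (m : U → U → U → U) : Prop :=
  ∀ R t₁ t₂ t₃, t₁ ∈ A.rel R → t₂ ∈ A.rel R → t₃ ∈ A.rel R →
    (fun j => m (t₁ j) (t₂ j) (t₃ j)) ∈ A.rel R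

/-- A ternary operation is Maltsev if `m x x y = y = m y x x`. -/
def IsMaltsev {U : Type*} (m : U → U → U → U) : Prop :=
  ∀ x y, m x x y = y ∧ m y x x = y


/-- Sort of an element of `OrU`, as a natural number. -/
def srt {α₁ α₂ : Type*} : OrU α₁ α₂ → ℕ
  | .a1 _ => 0
  | .a2 _ => 1
  | .c1 => 2
  | .c2 => 3

/-- The combined Maltsev operation on `OrU α₁ α₂`. -/
def om {α₁ α₂ : Type*} (m₁ : α₁ → α₁ → α₁ → α₁) (m₂ : α₂ → α₂ → α₂ → α₂) :
    OrU α₁ α₂ → OrU α₁ α₂ → OrU α₁ α₂ → OrU α₁ α₂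
  | .a1 x, .a1 y, .a1 z => .a1 (m₁ x y z)
  | .a2 x, .a2 y, .a2 z => .a2 (m₂ x y z)
  | x, y, z => if srt y = srt z then x else if srt x = srt y then z else x

/-- If `A₁` and `A₂` each admit a Maltsev polymorphism, then the tractable
homomorphism or-construction `OR_T(A₁,A₂)` admits a Maltsev polymorphism. -/
theorem or_construction_maltsev
    {τ₁ τ₂ : Type*} {ar₁ : τ₁ → ℕ} {ar₂ : τ₂ → ℕ} {α₁ α₂ : Type*}
    (A₁ : RelStr τ₁ ar₁ α₁) (A₂ : RelStr τ₂ ar₂ α₂)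
    (h₁ : ∃ m, IsPolymorphism3 A₁ m ∧ IsMaltsev m)
    (h₂ : ∃ m, IsPolymorphism3 A₂ m ∧ IsMaltsev m) :
    ∃ m, IsPolymorphism3 (ORtmpl A₁ A₂) m ∧ IsMaltsev m := by
  obtain ⟨m₁, hp₁, hm₁⟩ := h₁
  obtain ⟨m₂, hp₂, hm₂⟩ := h₂
  have H1 : ∀ x y, m₁ x x y = y := fun x y => (hm₁ x y).1
  have H1' : ∀ x y, m₁ y x x = y := fun x y => (hm₁ x y).2
  have H2 : ∀ x y, m₂ x x y = y := fun x y => (hm₂ x y).1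
  have H2' : ∀ x y, m₂ y x x = y := fun x y => (hm₂ x y).2
  refine ⟨om m₁ m₂, ?_, ?_⟩
  · intro R t₁ t₂ t₃ ht₁ ht₂ ht₃
    match R with
    | Sum.inl R₀ =>
      rcases ht₁ with ⟨s₁, hs₁, rfl⟩ | rfl <;>
        rcases ht₂ with ⟨s₂, hs₂, rfl⟩ | rfl <;>
          rcases ht₃ with ⟨s₃, hs₃, rfl⟩ | rfl
      · exact Or.inl ⟨_, hp₁ R₀ s₁ s₂ s₃ hs₁ hs₂ hs₃, by funext j; simp [om]⟩
      · exact Or.inr (by funext j; simp [om, srt])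
      · exact Or.inl ⟨s₁, hs₁, by funext j; simp [om, srt]⟩
      · exact Or.inl ⟨s₁, hs₁, by funext j; simp [om, srt]⟩
      · exact Or.inr (by funext j; simp [om, srt])
      · exact Or.inr (by funext j; simp [om, srt])
      · exact Or.inl ⟨s₃, hs₃, by funext j; simp [om, srt]⟩
      · exact Or.inr (by funext j; simp [om, srt])
    | Sum.inr (Sum.inl R₀) =>
      rcases ht₁ with ⟨s₁, hs₁, rfl⟩ | rfl <;>
        rcases ht₂ with ⟨s₂, hs₂, rfl⟩ | rfl <;>
          rcases ht₃ with ⟨s₃, hs₃, rfl⟩ | rfl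
      · exact Or.inl ⟨_, hp₂ R₀ s₁ s₂ s₃ hs₁ hs₂ hs₃, by funext j; simp [om]⟩
      · exact Or.inr (by funext j; simp [om, srt])
      · exact Or.inl ⟨s₁, hs₁, by funext j; simp [om, srt]⟩
      · exact Or.inl ⟨s₁, hs₁, by funext j; simp [om, srt]⟩
      · exact Or.inr (by funext j; simp [om, srt])
      · exact Or.inr (by funext j; simp [om, srt])
      · exact Or.inl ⟨s₃, hs₃, by funext j; simp [om, srt]⟩
      · exact Or.inr (by funext j; simp [om, srt])
    | Sum.inr (Sum.inr u) =>
      rcases ht₁ with ⟨⟨a₁', e₁0⟩, e₁1⟩ | ⟨e₁0, a₁', e₁1⟩ <;>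
        rcases ht₂ with ⟨⟨a₂', e₂0⟩, e₂1⟩ | ⟨e₂0, a₂', e₂1⟩ <;>
          rcases ht₃ with ⟨⟨a₃', e₃0⟩, e₃1⟩ | ⟨e₃0, a₃', e₃1⟩
      · exact Or.inl ⟨⟨m₁ a₁' a₂' a₃', by simp [om, srt, e₁0, e₂0, e₃0]⟩,
          by simp [om, srt, e₁1, e₂1, e₃1]⟩
      · exact Or.inr ⟨by simp [om, srt, e₁0, e₂0, e₃0],
          ⟨a₃', by simp [om, srt, e₁1, e₂1, e₃1]⟩⟩
      · exact Or.inl ⟨⟨a₁', by simp [om, srt, e₁0, e₂0, e₃0]⟩,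
          by simp [om, srt, e₁1, e₂1, e₃1]⟩
      · exact Or.inl ⟨⟨a₁', by simp [om, srt, e₁0, e₂0, e₃0]⟩,
          by simp [om, srt, e₁1, e₂1, e₃1]⟩
      · exact Or.inr ⟨by simp [om, srt, e₁0, e₂0, e₃0],
          ⟨a₁', by simp [om, srt, e₁1, e₂1, e₃1]⟩⟩
      · exact Or.inr ⟨by simp [om, srt, e₁0, e₂0, e₃0],
          ⟨a₁', by simp [om, srt, e₁1, e₂1, e₃1]⟩⟩
      · exact Or.inl ⟨⟨a₃', by simp [om, srt, e₁0, e₂0, e₃0]⟩,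
          by simp [om, srt, e₁1, e₂1, e₃1]⟩
      · exact Or.inr ⟨by simp [om, srt, e₁0, e₂0, e₃0],
          ⟨m₂ a₁' a₂' a₃', by simp [om, srt, e₁1, e₂1, e₃1]⟩⟩
  · intro x y
    rcases x with x | x | _ | _ <;> rcases y with y | y | _ | _ <;>
      simp [om, srt, H1, H1', H2, H2']
end

section
/- Let Γ be a 2-nilpotent group of odd order, let m be the exponent of its commutator subgroup [Γ,Γ], and define x + y := x·y·[x,y]^{(m-1)/2}, where [x,y] = x⁻¹y⁻¹xy. Then (Γ, +) is an Abelian group. -/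
/-- The commutator `[x,y] = x⁻¹y⁻¹xy` (the paper's convention). -/
def brkt {Γ : Type*} [Group Γ] (x y : Γ) : Γ := x⁻¹ * y⁻¹ * x * y

open scoped commutatorElement in
lemma brkt_mem {Γ : Type*} [Group Γ] (x y : Γ) : brkt x y ∈ commutator Γ := by
  have h : brkt x y = ⁅x⁻¹, y⁻¹⁆ := by simp [brkt, commutatorElement_def]
  rw [h, commutator_def]
  exact Subgroup.commutator_mem_commutator (Subgroup.mem_top _) (Subgroup.mem_top _)

lemma brkt_swap {Γ : Type*} [Group Γ] (x y : Γ) : brkt y x = (brkt x y)⁻¹ := by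
  simp [brkt, mul_assoc]

lemma mul_eq_brkt {Γ : Type*} [Group Γ] (x y : Γ) : x * y = y * x * brkt x y := by
  simp [brkt, mul_assoc]

/-- absorb a central element on the left factor -/
lemma brkt_absorb_left {Γ : Type*} [Group Γ] (a c z : Γ) (hc : ∀ g, Commute c g) :
    brkt (a * c) z = brkt a z := by
  simp only [brkt, mul_inv_rev]
  calc c⁻¹ * a⁻¹ * z⁻¹ * (a * c) * z
      = c⁻¹ * (a⁻¹ * z⁻¹ * a * c) * z := by group
    _ = c⁻¹ * (c * (a⁻¹ * z⁻¹ * a)) * z := by rw [(hc (a⁻¹ * z⁻¹ * a)).eq.symm]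
    _ = a⁻¹ * z⁻¹ * a * z := by group

/-- absorb a central element on the right factor -/
lemma brkt_absorb_right {Γ : Type*} [Group Γ] (x a c : Γ) (hc : ∀ g, Commute c g) :
    brkt x (a * c) = brkt x a := by
  simp only [brkt, mul_inv_rev]
  calc x⁻¹ * (c⁻¹ * a⁻¹) * x * (a * c)
      = x⁻¹ * c⁻¹ * (a⁻¹ * x * a * c) := by group
    _ = x⁻¹ * c⁻¹ * (c * (a⁻¹ * x * a)) := by rw [(hc (a⁻¹ * x * a)).eq.symm]
    _ = x⁻¹ * a⁻¹ * x * a := by group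

lemma brkt_mul_left {Γ : Type*} [Group Γ] (x y z : Γ) (hc : ∀ g, Commute (brkt x z) g) :
    brkt (x * y) z = brkt x z * brkt y z := by
  calc brkt (x * y) z = y⁻¹ * brkt x z * (z⁻¹ * y * z) := by
        simp only [brkt, mul_inv_rev]; group
    _ = brkt x z * y⁻¹ * (z⁻¹ * y * z) := by rw [← (hc y⁻¹).eq]
    _ = brkt x z * brkt y z := by simp only [brkt]; group

lemma brkt_mul_right {Γ : Type*} [Group Γ] (x y z : Γ) (hc : ∀ g, Commute (brkt x y) g) :
    brkt x (y * z) = brkt x z * brkt x y := by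
  calc brkt x (y * z) = x⁻¹ * z⁻¹ * x * (brkt x y * z) := by
        simp only [brkt, mul_inv_rev]; group
    _ = x⁻¹ * z⁻¹ * x * (z * brkt x y) := by rw [(hc z).eq]
    _ = brkt x z * brkt x y := by simp only [brkt]; group

/-- Baer trick: let `Γ` be a 2-nilpotent group of odd order, `m` the exponent of its
commutator subgroup, and define `x + y := x·y·[x,y]^((m-1)/2)`. Then `(Γ,+)` is an
Abelian group (commutative, associative, with identity `1` and inverses). -/
theorem baer_trick_abelian {Γ : Type*} [Group Γ] [Fintype Γ]
    (hnil : commutator Γ ≤ Subgroup.center Γ)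
    (hodd : Odd (Fintype.card Γ))
    (m : ℕ) (hm : m = Monoid.exponent ↥(commutator Γ))
    (add : Γ → Γ → Γ)
    (hadd : ∀ x y, add x y = x * y * (brkt x y) ^ ((m - 1) / 2)) :
    (∀ x y, add x y = add y x) ∧
    (∀ x y z, add (add x y) z = add x (add y z)) ∧
    (∀ x, add x 1 = x) ∧
    (∀ x, add x x⁻¹ = 1) := by
  -- centrality of commutators
  have hco : ∀ x y g : Γ, Commute (brkt x y) g := fun x y g =>
    ((Subgroup.mem_center_iff.mp (hnil (brkt_mem x y))) g).symm
  -- m is odd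
  have hmodd : Odd m := by
    have h1 : m ∣ Fintype.card Γ := by
      rw [hm, ← Nat.card_eq_fintype_card]
      exact (Group.exponent_dvd_nat_card).trans (Subgroup.card_subgroup_dvd_card _)
    rcases Nat.even_or_odd m with he | ho
    · exfalso
      obtain ⟨s, hs⟩ := hodd
      have h2 : (2 : ℕ) ∣ Fintype.card Γ := dvd_trans he.two_dvd h1
      obtain ⟨w, hw⟩ := h2
      omega
    · exact ho
  obtain ⟨t, ht⟩ := hmodd
  have hk : (m - 1) / 2 = t := by omega
  -- commutators have order dividing m
  have hpow : ∀ x y : Γ, brkt x y ^ m = 1 := by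
    intro x y
    have h1 : (⟨brkt x y, brkt_mem x y⟩ : ↥(commutator Γ)) ^ m = 1 := by
      rw [hm]; exact Monoid.pow_exponent_eq_one _
    simpa using congrArg Subtype.val h1
  simp only [hadd, hk]
  refine ⟨?_, ?_, ?_, ?_⟩
  · -- commutativity
    intro x y
    have key : brkt x y ^ (t + 1) = (brkt x y ^ t)⁻¹ := by
      apply eq_inv_of_mul_eq_one_left
      rw [← pow_add]
      have h2 : t + 1 + t = m := by omega
      rw [h2, hpow]
    calc x * y * brkt x y ^ t
        = y * x * brkt x y * brkt x y ^ t := by rw [← mul_eq_brkt]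
      _ = y * x * brkt x y ^ (t + 1) := by
          rw [mul_assoc (y * x), ← pow_succ']
      _ = y * x * (brkt x y ^ t)⁻¹ := by rw [key]
      _ = y * x * brkt y x ^ t := by rw [brkt_swap x y, inv_pow]
  · -- associativity
    intro x y z
    rw [brkt_absorb_left (x * y) (brkt x y ^ t) z (fun g => (hco x y g).pow_left t),
        brkt_absorb_right x (y * z) (brkt y z ^ t) (fun g => (hco y z g).pow_left t),
        brkt_mul_left x y z (hco x z), brkt_mul_right x y z (hco x y),
        (hco x z (brkt y z)).mul_pow t, (hco x z (brkt x y)).mul_pow t]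
    set A := brkt x y ^ t with hA'
    set B := brkt x z ^ t with hB'
    set C := brkt y z ^ t with hC'
    have hA : ∀ g : Γ, Commute A g := fun g => (hco x y g).pow_left t
    have hB : ∀ g : Γ, Commute B g := fun g => (hco x z g).pow_left t
    have hC : ∀ g : Γ, Commute C g := fun g => (hco y z g).pow_left t
    have hABC : A * (B * C) = C * (B * A) := by
      calc A * (B * C) = B * A * C := by rw [← mul_assoc, ← (hB A).eq]
        _ = C * (B * A) := (hC (B * A)).eq.symm
    calc x * y * A * z * (B * C)
        = x * y * (A * z) * (B * C) := by group
      _ = x * y * (z * A) * (B * C) := by rw [(hA z).eq]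
      _ = x * y * z * (A * (B * C)) := by group
      _ = x * y * z * (C * (B * A)) := by rw [hABC]
      _ = x * (y * z * C) * (B * A) := by group
  · intro x
    have h1 : brkt x 1 = 1 := by simp [brkt]
    simp [h1]
  · intro x
    have h1 : brkt x x⁻¹ = 1 := by simp [brkt, mul_assoc]
    simp [h1]
end
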